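/- Let ε > 0 and let J : ℝ³ → ℝ³ be continuously differentiable with compact support, divergence free (div J = 0 on ℝ³), and with integrable Fourier transform F[J]. Define the indicator I_E(z) := (−i√ε/(2π²)) ∫_{S²} ∫_0^∞ E_∞(x̂,k) e^{i k x̂·z} k dk dσ(x̂) for z ∈ ℝ³. Then I_E(z) = J(z) for every z ∈ ℝ³. -/

import Mathlib

/-!
STATEMENT 8 (Theorem 3.1 of the paper): for a divergence-free current density `J`,
the indicator `I_E` built from the electric far field patterns equals `J`.
-/

open MeasureTheory Real

noncomputable section

namespace EMSourceE

abbrev E3 := EuclideanSpace ℝ (Fin 3)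

/-- Cross product in ℂ³. -/
def crossC (u v : Fin 3 → ℂ) : Fin 3 → ℂ :=
  ![u 1 * v 2 - u 2 * v 1, u 2 * v 0 - u 0 * v 2, u 0 * v 1 - u 1 * v 0]

/-- Componentwise Fourier transform of a vector field. -/
def FT3 (U : E3 → Fin 3 → ℂ) (ξ : E3) : Fin 3 → ℂ :=
  fun j => ∫ x : E3, U x j * Complex.exp (-Complex.I * ((∑ i, x i * ξ i : ℝ) : ℂ))

/-- Electric far field pattern
`E_∞(x̂,k) := (ik/(4π√ε)) x̂ × ((∫ e^{-i k x̂·y} J(y) dy) × x̂)`. -/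
def Einf (eps : ℝ) (J : E3 → Fin 3 → ℝ) (xhat : E3) (k : ℝ) : Fin 3 → ℂ :=
  fun j => (Complex.I * (k : ℂ) / ((4 * π * Real.sqrt eps : ℝ) : ℂ)) *
    crossC (fun i => ((xhat i : ℝ) : ℂ))
      (crossC
        (fun i => ∫ y : E3,
          Complex.exp (-Complex.I * (k : ℂ) * ((∑ i', xhat i' * y i' : ℝ) : ℂ)) *
            ((J y i : ℝ) : ℂ))
        (fun i => ((xhat i : ℝ) : ℂ))) j

/-- Divergence `div J = ∂₁J₁ + ∂₂J₂ + ∂₃J₃`. -/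
def divJ (J : E3 → Fin 3 → ℝ) (x : E3) : ℝ :=
  ∑ j, fderiv ℝ (fun y => J y j) x (EuclideanSpace.single j (1 : ℝ))

/-- The indicator
`I_E(z) := (-i√ε/(2π²)) ∫_{S²} ∫_0^∞ E_∞(x̂,k) e^{i k x̂·z} k dk dσ(x̂)`. -/
def IE (eps : ℝ) (J : E3 → Fin 3 → ℝ) (z : E3) : Fin 3 → ℂ :=
  (-Complex.I * ((Real.sqrt eps / (2 * π ^ 2) : ℝ) : ℂ)) •
    ∫ xhat : Metric.sphere (0 : E3) 1,
      (∫ k in Set.Ioi (0 : ℝ), fun j =>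
        Einf eps J (xhat : E3) k j *
          Complex.exp (Complex.I * (k : ℂ) *
            ((∑ i, (xhat : E3) i * z i : ℝ) : ℂ)) * (k : ℂ))
      ∂((volume : Measure E3).toSphere)

/-! ### Auxiliary lemmas -/

open scoped FourierTransform RealInnerProductSpace

lemma finrank_E3 : Module.finrank ℝ E3 = 3 := finrank_euclideanSpace_fin

/-- Polar coordinate formula for integrals over `ℝ³`. -/
lemma polar {F : Type*} [NormedAddCommGroup F] [NormedSpace ℝ F] [CompleteSpace F]
    (g : E3 → F) (hg : Integrable g) :
    (∫ xhat : Metric.sphere (0:E3) 1, (∫ r in Set.Ioi (0:ℝ), (r^2 : ℝ) • g (r • (xhat : E3)))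
      ∂((volume : Measure E3).toSphere)) = ∫ x, g x := by
  set μ : Measure E3 := volume
  set φ : Metric.sphere (0:E3) 1 × Set.Ioi (0:ℝ) → F := fun p => g (p.2.1 • p.1.1) with hφ
  have hcomp : ∀ x : ({0}ᶜ : Set E3), φ (homeomorphUnitSphereProd E3 x) = g x.1 := by
    intro x
    have hx : (x : E3) ≠ 0 := x.2
    simp only [hφ, homeomorphUnitSphereProd_apply_snd_coe, homeomorphUnitSphereProd_apply_fst_coe]
    rw [smul_inv_smul₀ (norm_ne_zero_iff.2 hx)]
  have hint0 : Integrable (fun x : ({0}ᶜ : Set E3) => g x.1) (μ.comap Subtype.val) := by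
    have hres : IntegrableOn g ({0}ᶜ) μ := hg.integrableOn
    rw [IntegrableOn, ← map_comap_subtype_coe (measurableSet_singleton (0:E3)).compl,
      integrable_map_measure] at hres
    · exact hres
    · exact hg.aestronglyMeasurable.mono_measure (by
        rw [map_comap_subtype_coe (measurableSet_singleton (0:E3)).compl]
        exact Measure.restrict_le_self)
    · exact measurable_subtype_coe.aemeasurable
  have hintφ : Integrable φ ((μ.toSphere).prod (Measure.volumeIoiPow (Module.finrank ℝ E3 - 1))) := by
    rw [← (μ.measurePreserving_homeomorphUnitSphereProd).integrable_comp_emb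
      (Homeomorph.measurableEmbedding _)]
    have heq : (fun x : ({0}ᶜ : Set E3) => g x.1)
        = φ ∘ (homeomorphUnitSphereProd E3) := funext fun x => (hcomp x).symm
    exact heq ▸ hint0
  have h2 := (μ.measurePreserving_homeomorphUnitSphereProd).integral_comp
    (Homeomorph.measurableEmbedding _) φ
  have h1 : ∫ x : ({0}ᶜ : Set E3), g x.1 ∂(μ.comap Subtype.val) = ∫ x, g x ∂μ := by
    rw [integral_subtype_comap (measurableSet_singleton (0:E3)).compl,
      MeasureTheory.restrict_compl_singleton]
  have h3 : ∫ x : ({0}ᶜ : Set E3), φ (homeomorphUnitSphereProd E3 x) ∂(μ.comap Subtype.val)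
      = ∫ x : ({0}ᶜ : Set E3), g x.1 ∂(μ.comap Subtype.val) := by
    exact integral_congr_ae (Filter.Eventually.of_forall hcomp)
  have h4 : ∫ p, φ p ∂((μ.toSphere).prod (Measure.volumeIoiPow (Module.finrank ℝ E3 - 1)))
      = ∫ xhat : Metric.sphere (0:E3) 1, (∫ r : Set.Ioi (0:ℝ), φ (xhat, r)
          ∂(Measure.volumeIoiPow (Module.finrank ℝ E3 - 1))) ∂μ.toSphere :=
    MeasureTheory.integral_prod φ hintφ
  have h5 : ∀ xhat : Metric.sphere (0:E3) 1,
      (∫ r : Set.Ioi (0:ℝ), φ (xhat, r) ∂(Measure.volumeIoiPow (Module.finrank ℝ E3 - 1)))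
        = ∫ r in Set.Ioi (0:ℝ), (r^2 : ℝ) • g (r • (xhat : E3)) := by
    intro xhat
    have : Module.finrank ℝ E3 - 1 = 2 := by rw [finrank_E3]
    rw [this]
    simp only [Measure.volumeIoiPow, ENNReal.ofReal]
    rw [integral_withDensity_eq_integral_smul
      ((measurable_subtype_coe.pow_const _).real_toNNReal),
      integral_subtype_comap measurableSet_Ioi
        (fun a : ℝ => Real.toNNReal (a ^ 2) • g (a • (xhat:E3)))]
    refine setIntegral_congr_fun measurableSet_Ioi fun r hr => ?_
    rw [NNReal.smul_def, Real.coe_toNNReal _ (pow_nonneg hr.out.le _)]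
  rw [← h1, ← h3, h2, h4]
  exact integral_congr_ae (Filter.Eventually.of_forall fun xhat => (h5 xhat).symm)

variable {J : E3 → Fin 3 → ℝ}

lemma comp_contDiff (hJ : ContDiff ℝ 1 J) (j : Fin 3) :
    ContDiff ℝ 1 (fun x => ((J x j : ℝ) : ℂ)) :=
  Complex.ofRealCLM.contDiff.comp
    ((ContinuousLinearMap.proj (R := ℝ) (φ := fun _ : Fin 3 => ℝ) j).contDiff.comp hJ)

lemma comp_supp (hJ_supp : HasCompactSupport J) (j : Fin 3) :
    HasCompactSupport (fun x => ((J x j : ℝ) : ℂ)) :=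
  hJ_supp.comp_left (g := fun v : Fin 3 → ℝ => ((v j : ℝ) : ℂ)) (by simp)

lemma comp_integrable (hJ : ContDiff ℝ 1 J) (hJ_supp : HasCompactSupport J) (j : Fin 3) :
    Integrable (fun x => ((J x j : ℝ) : ℂ)) :=
  (comp_contDiff hJ j).continuous.integrable_of_hasCompactSupport (comp_supp hJ_supp j)

lemma fderiv_comp_integrable (hJ : ContDiff ℝ 1 J) (hJ_supp : HasCompactSupport J) (j : Fin 3) :
    Integrable (fderiv ℝ (fun x => ((J x j : ℝ) : ℂ))) :=
  ((comp_contDiff hJ j).continuous_fderiv one_ne_zero).integrable_of_hasCompactSupport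
    ((comp_supp hJ_supp j).fderiv (𝕜 := ℝ))

/-- Divergence-free implies the Fourier transform is orthogonal to the frequency. -/
lemma key_div (hJ : ContDiff ℝ 1 J) (hJ_supp : HasCompactSupport J)
    (hdiv : ∀ x : E3, divJ J x = 0) (w : E3) :
    ∑ j, (w j : ℂ) * 𝓕 (fun x => ((J x j : ℝ) : ℂ)) w = 0 := by
  set f : Fin 3 → E3 → ℂ := fun j x => ((J x j : ℝ) : ℂ) with hf
  have hint : ∀ j, Integrable (f j) := comp_integrable hJ hJ_supp
  have hint' : ∀ j, Integrable (fderiv ℝ (f j)) := fderiv_comp_integrable hJ hJ_supp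
  have hdf : ∀ j, Differentiable ℝ (f j) := fun j => (comp_contDiff hJ j).differentiable one_ne_zero
  have h : ∀ j, 𝓕 (fderiv ℝ (f j)) = VectorFourier.fourierSMulRight (-(innerSL ℝ)) (𝓕 (f j)) :=
    fun j => Real.fourier_fderiv (hint j) (hdf j) (hint' j)
  have e1 : ∀ j, Integrable (fun v => 𝐞 (-⟪v, w⟫) • fderiv ℝ (f j) v) :=
    fun j => (Real.fourierIntegral_convergent_iff w).2 (hint' j)
  have hfd : ∀ (j : Fin 3) (v : E3),
      fderiv ℝ (f j) v = Complex.ofRealCLM.comp (fderiv ℝ (fun y => J y j) v) := by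
    intro j v
    have hdJ : DifferentiableAt ℝ (fun y => J y j) v :=
      (((ContinuousLinearMap.proj (R := ℝ) (φ := fun _ : Fin 3 => ℝ) j).contDiff.comp
        hJ).differentiable one_ne_zero) v
    exact (Complex.ofRealCLM.hasFDerivAt.comp v hdJ.hasFDerivAt).fderiv
  have hsum : ∀ v : E3,
      ∑ j, (fderiv ℝ (f j) v) (EuclideanSpace.single j 1) = 0 := by
    intro v
    have : ∑ j, (fderiv ℝ (f j) v) (EuclideanSpace.single j 1)
        = ((divJ J v : ℝ) : ℂ) := by
      rw [divJ, Complex.ofReal_sum]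
      refine Finset.sum_congr rfl fun j _ => ?_
      rw [hfd j v]; rfl
    rw [this, hdiv v, Complex.ofReal_zero]
  have hL : ∑ j, (𝓕 (fderiv ℝ (f j)) w) (EuclideanSpace.single j 1) = 0 := by
    have h2 : ∀ j, (𝓕 (fderiv ℝ (f j)) w) (EuclideanSpace.single j 1)
        = ∫ v, 𝐞 (-⟪v, w⟫) • ((fderiv ℝ (f j) v) (EuclideanSpace.single j 1)) := by
      intro j
      rw [Real.fourier_eq, ContinuousLinearMap.integral_apply (e1 j)]
      exact integral_congr_ae (Filter.Eventually.of_forall fun v => rfl)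
    simp_rw [h2]
    rw [← integral_finset_sum]
    · rw [← integral_zero]
      refine integral_congr_ae (Filter.Eventually.of_forall fun v => ?_)
      have : ∑ i : Fin 3, 𝐞 (-⟪v, w⟫) • ((fderiv ℝ (f i) v) (EuclideanSpace.single i 1))
          = (0 : ℂ) := by rw [← Finset.smul_sum, hsum v, smul_zero]
      simpa using this
    · exact fun j _ => (e1 j).apply_continuousLinearMap _
  have hR : ∑ j, (𝓕 (fderiv ℝ (f j)) w) (EuclideanSpace.single j 1)
      = (2 * π * Complex.I) * ∑ j, (w j : ℂ) * 𝓕 (f j) w := by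
    rw [Finset.mul_sum]
    refine Finset.sum_congr rfl fun j _ => ?_
    rw [h j, VectorFourier.fourierSMulRight_apply]
    have hinner : ⟪w, EuclideanSpace.single j (1:ℝ)⟫ = w j := by
      simp [EuclideanSpace.inner_single_right]
    simp only [ContinuousLinearMap.neg_apply, innerSL_apply_apply, hinner]
    rw [Complex.real_smul, smul_eq_mul]
    push_cast
    have hinner' : ((innerSL ℝ) w) (EuclideanSpace.single j (1:ℝ)) = w j := by
      rw [innerSL_apply_apply]; exact hinner
    rw [hinner']
    ring
  have h0 := hL
  rw [hR] at h0
  have h2πI : (2 * π * Complex.I) ≠ 0 := by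
    simp [Real.pi_ne_zero, Complex.I_ne_zero, Complex.ofReal_ne_zero]
  exact (mul_eq_zero.1 h0).resolve_left h2πI

lemma inner_E3 (x y : E3) : ⟪x, y⟫ = ∑ i, x i * y i := by
  simp [PiLp.inner_apply, RCLike.inner_apply, conj_trivial]
  exact Finset.sum_congr rfl fun i _ => mul_comm _ _

/-- Translate the raw Fourier-type integral into Mathlib's `𝓕`. -/
lemma fourier_flip (h : E3 → ℂ) (ξ : E3) :
    (∫ y : E3, h y * Complex.exp (-Complex.I * ((∑ i, y i * ξ i : ℝ) : ℂ)))
      = 𝓕 h ((2 * π)⁻¹ • ξ) := by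
  rw [Real.fourier_eq']
  refine integral_congr_ae (Filter.Eventually.of_forall fun y => ?_)
  dsimp only
  rw [smul_eq_mul, mul_comm _ (h y)]
  congr 1
  have hr : (-2 * π * ⟪y, (2*π)⁻¹ • ξ⟫ : ℝ) = -(∑ i, y i * ξ i) := by
    rw [real_inner_smul_right, inner_E3]
    have hπ : (2 * π : ℝ) ≠ 0 := by positivity
    field_simp
  rw [hr]
  push_cast
  ring

/-- Vector triple product collapse. -/
lemma cross_collapse (u G : Fin 3 → ℂ) (hu : u 0^2 + u 1^2 + u 2^2 = 1)
    (hG : u 0 * G 0 + u 1 * G 1 + u 2 * G 2 = 0) (j : Fin 3) :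
    crossC u (crossC G u) j = G j := by
  fin_cases j
  · show crossC u (crossC G u) 0 = G 0
    simp only [crossC, Matrix.cons_val_zero, Matrix.cons_val_one, Matrix.head_cons,
      Matrix.cons_val_two, Matrix.tail_cons]
    linear_combination G 0 * hu - u 0 * hG
  · show crossC u (crossC G u) 1 = G 1
    simp only [crossC, Matrix.cons_val_zero, Matrix.cons_val_one, Matrix.head_cons,
      Matrix.cons_val_two, Matrix.tail_cons]
    linear_combination G 1 * hu - u 1 * hG
  · show crossC u (crossC G u) 2 = G 2
    simp only [crossC, Matrix.cons_val_zero, Matrix.cons_val_one, Matrix.head_cons,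
      Matrix.cons_val_two, Matrix.tail_cons]
    linear_combination G 2 * hu - u 2 * hG

theorem indicator_E_eq_source (eps : ℝ) (heps : 0 < eps)
    (J : E3 → Fin 3 → ℝ) (hJ : ContDiff ℝ 1 J) (hJ_supp : HasCompactSupport J)
    (hdiv : ∀ x : E3, divJ J x = 0)
    (hFT : Integrable (FT3 (fun y j => ((J y j : ℝ) : ℂ))))
    (z : E3) :
    IE eps J z = fun j => ((J z j : ℝ) : ℂ) := by
  have hπ : (π : ℝ) ≠ 0 := Real.pi_ne_zero
  have hε : Real.sqrt eps ≠ 0 := (Real.sqrt_pos.2 heps).ne'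
  set f : Fin 3 → E3 → ℂ := fun j x => ((J x j : ℝ) : ℂ) with hfdef
  set Jc : E3 → Fin 3 → ℂ := fun y j => ((J y j : ℝ) : ℂ) with hJcdef
  -- FT3 in terms of 𝓕
  have hFT3 : ∀ (ξ : E3) (j : Fin 3), FT3 Jc ξ j = 𝓕 (f j) ((2 * π)⁻¹ • ξ) := by
    intro ξ j
    exact fourier_flip (f j) ξ
  -- component integrability of the Fourier transform
  have hFTj : ∀ j, Integrable (𝓕 (f j)) := by
    intro j
    have h1 : Integrable (fun ξ => FT3 Jc ξ j) :=
      (ContinuousLinearMap.proj (R := ℂ) (φ := fun _ : Fin 3 => ℂ) j).integrable_comp hFT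
    have h2 : Integrable (fun ξ : E3 => 𝓕 (f j) ((2 * π)⁻¹ • ξ)) := by
      refine h1.congr (Filter.Eventually.of_forall fun ξ => ?_)
      exact hFT3 ξ j
    exact (integrable_comp_smul_iff volume (𝓕 (f j)) (by positivity : ((2*π)⁻¹ : ℝ) ≠ 0)).1 h2
  -- the function G
  set G : E3 → Fin 3 → ℂ :=
    fun ξ => Complex.exp (Complex.I * ((∑ i, ξ i * z i : ℝ) : ℂ)) • FT3 Jc ξ with hGdef
  have hGint : Integrable G := by
    have hmeas : AEStronglyMeasurable G volume := by
      have hcont : Continuous fun ξ : E3 => Complex.exp (Complex.I * ((∑ i, ξ i * z i : ℝ) : ℂ)) := by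
        refine Complex.continuous_exp.comp (continuous_const.mul ?_)
        exact Complex.continuous_ofReal.comp
          (continuous_finset_sum _ fun i _ =>
            ((EuclideanSpace.proj (𝕜 := ℝ) i).continuous).mul continuous_const)
      exact hcont.aestronglyMeasurable.smul hFT.1
    refine hFT.norm.mono' hmeas (Filter.Eventually.of_forall fun ξ => ?_)
    rw [hGdef]
    simp only [norm_smul]
    rw [mul_comm Complex.I]
    rw [Complex.norm_exp_ofReal_mul_I]
    simp
  -- orthogonality of frequency and Fourier transform, via divergence freeness
  have hkey := key_div hJ hJ_supp hdiv
  -- Step 1: the inner integral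
  set c1 : ℂ := Complex.I / ((4 * π * Real.sqrt eps : ℝ) : ℂ) with hc1
  have step1 : ∀ xhat : Metric.sphere (0 : E3) 1,
      (∫ k in Set.Ioi (0 : ℝ), fun j =>
        Einf eps J (xhat : E3) k j *
          Complex.exp (Complex.I * (k : ℂ) * ((∑ i, (xhat : E3) i * z i : ℝ) : ℂ)) * (k : ℂ))
      = c1 • ∫ k in Set.Ioi (0 : ℝ), (k^2 : ℝ) • G (k • (xhat : E3)) := by
    intro xhat
    rw [← integral_smul]
    refine setIntegral_congr_fun measurableSet_Ioi fun k hk => ?_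
    have hk0 : (0:ℝ) < k := hk
    funext j
    set u : Fin 3 → ℂ := fun i => (((xhat : E3) i : ℝ) : ℂ) with hu_def
    set Gv : Fin 3 → ℂ := fun i => ∫ y : E3,
      Complex.exp (-Complex.I * (k : ℂ) * ((∑ i', (xhat : E3) i' * y i' : ℝ) : ℂ)) *
        ((J y i : ℝ) : ℂ) with hGv_def
    -- Gv in terms of 𝓕
    have hGv : ∀ i, Gv i = 𝓕 (f i) (((2 * π)⁻¹ * k) • (xhat : E3)) := by
      intro i
      have h1 : Gv i = ∫ y : E3, f i y *
          Complex.exp (-Complex.I * ((∑ i', y i' * (k • (xhat : E3)) i' : ℝ) : ℂ)) := by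
        rw [hGv_def]
        refine integral_congr_ae (Filter.Eventually.of_forall fun y => ?_)
        dsimp only
        have hs : (∑ i', y i' * (k • (xhat : E3)) i' : ℝ)
            = k * (∑ i', (xhat : E3) i' * y i' : ℝ) := by
          rw [Finset.mul_sum]
          refine Finset.sum_congr rfl fun i' _ => ?_
          rw [PiLp.smul_apply, smul_eq_mul]
          ring
        rw [show -Complex.I * (k : ℂ) * ((∑ i', (xhat : E3) i' * y i' : ℝ) : ℂ)
            = -Complex.I * ((∑ i', y i' * (k • (xhat : E3)) i' : ℝ) : ℂ) from by
          rw [hs]; push_cast; ring]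
        exact mul_comm _ _
      rw [h1, fourier_flip, smul_smul]
    -- FT3 at k • xhat is Gv
    have hFT3G : FT3 Jc (k • (xhat : E3)) j = Gv j := by
      rw [hFT3, hGv, smul_smul]
    -- orthogonality
    have hort : u 0 * Gv 0 + u 1 * Gv 1 + u 2 * Gv 2 = 0 := by
      have h0 := hkey (((2 * π)⁻¹ * k) • (xhat : E3))
      rw [Fin.sum_univ_three] at h0
      simp only [PiLp.smul_apply, smul_eq_mul] at h0
      have hc : (((2 * π)⁻¹ * k : ℝ) : ℂ) ≠ 0 := by
        simp only [ne_eq, Complex.ofReal_eq_zero]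
        positivity
      have h1 : (((2 * π)⁻¹ * k : ℝ) : ℂ) *
          (u 0 * Gv 0 + u 1 * Gv 1 + u 2 * Gv 2) = 0 := by
        rw [← h0]
        simp only [hu_def, hGv]
        push_cast
        ring
      exact (mul_eq_zero.1 h1).resolve_left hc
    -- norm one
    have hnorm : u 0^2 + u 1^2 + u 2^2 = 1 := by
      have h1 : ‖(xhat : E3)‖ = 1 := mem_sphere_zero_iff_norm.1 xhat.2
      have h2 : (∑ i, (xhat : E3) i ^ 2 : ℝ) = 1 := by
        have := EuclideanSpace.norm_eq (xhat : E3)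
        rw [h1] at this
        have h3 : Real.sqrt (∑ i, ‖(xhat : E3) i‖ ^ 2) = 1 := this.symm
        rw [show (∑ i, ‖(xhat : E3) i‖ ^ 2 : ℝ) = ∑ i, (xhat : E3) i ^ 2 by
          refine Finset.sum_congr rfl fun i _ => ?_
          rw [Real.norm_eq_abs, sq_abs]] at h3
        have h4 := congrArg (· ^ 2) h3
        simpa [Real.sq_sqrt (Finset.sum_nonneg fun i _ => sq_nonneg _)] using h4
      rw [Fin.sum_univ_three] at h2
      have := congrArg (fun r : ℝ => (r : ℂ)) h2
      push_cast at this
      exact this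
    -- collapse the double cross product
    have hcross : crossC u (crossC Gv u) j = Gv j := cross_collapse u Gv hnorm hort j
    -- combine
    show Einf eps J (xhat : E3) k j *
        Complex.exp (Complex.I * (k : ℂ) * ((∑ i, (xhat : E3) i * z i : ℝ) : ℂ)) * (k : ℂ)
      = (c1 • ((k^2 : ℝ) • G (k • (xhat : E3)))) j
    rw [Einf]
    rw [show (crossC (fun i => (((xhat:E3) i : ℝ) : ℂ))
        (crossC (fun i => ∫ y : E3,
          Complex.exp (-Complex.I * (k : ℂ) * ((∑ i', (xhat:E3) i' * y i' : ℝ) : ℂ)) *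
            ((J y i : ℝ) : ℂ)) (fun i => (((xhat:E3) i : ℝ) : ℂ)))) j
        = crossC u (crossC Gv u) j from rfl]
    rw [hcross]
    simp only [Pi.smul_apply, smul_eq_mul, hGdef]
    rw [Complex.real_smul, hFT3G]
    have hsz : (∑ i, (k • (xhat : E3)) i * z i : ℝ) = k * (∑ i, (xhat : E3) i * z i : ℝ) := by
      rw [Finset.mul_sum]
      refine Finset.sum_congr rfl fun i _ => ?_
      rw [PiLp.smul_apply, smul_eq_mul]
      ring
    rw [hsz, hc1]
    push_cast
    ring
  -- Step 2: rewrite IE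
  have step2 : IE eps J z
      = ((-Complex.I * ((Real.sqrt eps / (2 * π ^ 2) : ℝ) : ℂ)) * c1) • ∫ ξ, G ξ := by
    rw [IE]
    rw [integral_congr_ae (Filter.Eventually.of_forall step1)]
    rw [integral_smul, smul_smul]
    congr 1
    exact polar G hGint
  -- Step 3: componentwise Fourier inversion
  rw [step2]
  funext j
  have hGj : (∫ ξ, G ξ) j = ∫ ξ, G ξ j := by
    have h := (ContinuousLinearMap.proj (R := ℂ) (φ := fun _ : Fin 3 => ℂ) j).integral_comp_comm
      hGint
    simpa [ContinuousLinearMap.proj_apply] using h.symm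
  have step3 : ∫ ξ, G ξ j = ((2 * π : ℝ)^3 : ℝ) • ((J z j : ℝ) : ℂ) := by
    set F : E3 → ℂ := fun w =>
      Complex.exp ((((2 * π * ⟪w, z⟫ : ℝ)) : ℂ) * Complex.I) • 𝓕 (f j) w with hFdef
    have h1 : ∀ ξ : E3, G ξ j = F ((2*π)⁻¹ • ξ) := by
      intro ξ
      have h2 : (2 * π * ⟪(2*π:ℝ)⁻¹ • ξ, z⟫ : ℝ) = ∑ i, ξ i * z i := by
        rw [real_inner_smul_left, inner_E3]
        field_simp
      simp only [hGdef, hFdef, Pi.smul_apply, smul_eq_mul]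
      rw [hFT3 ξ j, h2, mul_comm Complex.I (((∑ i, ξ i * z i : ℝ)) : ℂ)]
    calc ∫ ξ, G ξ j = ∫ ξ, F ((2*π)⁻¹ • ξ) :=
          integral_congr_ae (Filter.Eventually.of_forall h1)
      _ = |(((2*π : ℝ)⁻¹) ^ Module.finrank ℝ E3)⁻¹| • ∫ w, F w :=
          Measure.integral_comp_smul volume F ((2*π : ℝ)⁻¹)
      _ = ((2 * π : ℝ)^3 : ℝ) • ∫ w, F w := by
          rw [finrank_E3]
          congr 1
          rw [abs_of_pos (by positivity)]
          rw [inv_pow, inv_inv]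
      _ = ((2 * π : ℝ)^3 : ℝ) • ((J z j : ℝ) : ℂ) := by
          have hinv : 𝓕⁻ (𝓕 (f j)) z = f j z :=
            (comp_integrable hJ hJ_supp j).fourierInv_fourier_eq (hFTj j)
              ((comp_contDiff hJ j).continuous.continuousAt)
          have hFz : ∫ w, F w = 𝓕⁻ (𝓕 (f j)) z := by
            rw [Real.fourierInv_eq']
          rw [hFz, hinv]
  rw [Pi.smul_apply, hGj, step3, smul_eq_mul, Complex.real_smul, hc1]
  have hπC : (π : ℂ) ≠ 0 := Complex.ofReal_ne_zero.2 hπ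
  have hεC : ((Real.sqrt eps : ℝ) : ℂ) ≠ 0 := Complex.ofReal_ne_zero.2 hε
  push_cast
  field_simp
  linear_combination (-4 * ((J z j : ℝ) : ℂ)) *
    Complex.I_sq

end EMSourceE

end
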